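/- arXiv:0708.1984 — 4 statements merged into one kernel-verified Lean document; each statement's English description precedes it below -/
import Mathlib

section
/- Let B be an infinite Boolean algebra and let λ be an infinite cardinal such that no set of ultrafilters of B of cardinality less than λ is dense in the Stone space of B. Then there exists a subset D of the product space Stone(B) × Stone(B) such that D has cardinality λ and D is discrete as a subspace (every point of D has an open neighborhood in Stone(B) × Stone(B) meeting D only in that point). -/
/-!
By transfinite recursion along `λ` choose ultrafilters `x β`, `y β` and elements `u β` with
`u β ∈ x β`, `u β ∉ y β`, and for `γ < β`: `u β ∉ x γ` and `u γ ∈ x β → u γ ∈ y β`.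
Then `[u β] × [(u β)ᶜ]` isolates `(x β, y β)`: an earlier pair fails the first coordinate,
a later one the second. At stage `β` fewer than `λ` ultrafilters are not dense, so some
nonzero `u` lies outside all earlier `x γ` and outside chosen witnesses of the nonzero finite
meets of the earlier `u γ`. Taking `x ∋ u`, the earlier `u γ ∈ x` together with `uᶜ` have the
finite intersection property, which yields `y`.
-/

open Cardinal

universe u

/-- An ultrafilter of a Boolean algebra `B`: a proper filter containing,
for each `b : B`, either `b` or `bᶜ`. -/
structure BAUltrafilter (B : Type u) [BooleanAlgebra B] where
  carrier : Set B
  top_mem : ⊤ ∈ carrier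
  bot_not_mem : ⊥ ∉ carrier
  inf_mem : ∀ ⦃x y : B⦄, x ∈ carrier → y ∈ carrier → x ⊓ y ∈ carrier
  mem_of_le : ∀ ⦃x y : B⦄, x ∈ carrier → x ≤ y → y ∈ carrier
  mem_or_compl_mem : ∀ x : B, x ∈ carrier ∨ xᶜ ∈ carrier

instance (B : Type u) [BooleanAlgebra B] : Membership B (BAUltrafilter B) :=
  ⟨fun q b => b ∈ q.carrier⟩

/-- The Stone topology on the set of ultrafilters of `B`, generated by the
basic (clopen) sets `{q : b ∈ q}` for `b : B`. -/
instance stoneTopology (B : Type u) [BooleanAlgebra B] :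
    TopologicalSpace (BAUltrafilter B) :=
  TopologicalSpace.generateFrom {U | ∃ b : B, U = {q : BAUltrafilter B | b ∈ q}}

open Order TopologicalSpace

theorem Cardinal.mk_finset_lt {α : Type u} {c : Cardinal.{u}} (hc : ℵ₀ ≤ c) (hα : #α < c) :
    #(Finset α) < c := by
  cases finite_or_infinite α
  · exact (lt_aleph0_of_finite _).trans_le hc
  · rwa [mk_finset_of_infinite]

theorem WellFoundedLT.exists_seq_of_forall_exists {ι α : Type*} [Preorder ι] [WellFoundedLT ι]
    {P : (β : ι) → (Set.Iio β → α) → α → Prop} (h : ∀ β g, ∃ a, P β g a) :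
    ∃ f : ι → α, ∀ β, P β (fun γ => f γ) (f β) := by
  choose next hnext using h
  let f : ι → α := wellFounded_lt.fix fun β rec => next β fun γ => rec γ γ.2
  refine ⟨f, fun β => ?_⟩
  rw [show f β = next β fun γ => f γ from wellFounded_lt.fix_eq _ β]
  exact hnext β _

namespace BAUltrafilter

variable {B : Type u} [BooleanAlgebra B]

theorem ne_bot_of_mem {x : BAUltrafilter B} {b : B} (h : b ∈ x) : b ≠ ⊥ :=
  fun hb => x.bot_not_mem (hb ▸ h)

theorem compl_mem_iff_notMem {x : BAUltrafilter B} {b : B} : bᶜ ∈ x ↔ b ∉ x := by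
  refine ⟨fun hc hb => x.bot_not_mem ?_, (x.mem_or_compl_mem b).resolve_left⟩
  simpa using x.inf_mem hb hc

theorem finset_inf_mem {x : BAUltrafilter B} {F : Finset B} (h : ∀ a ∈ F, a ∈ x) :
    F.inf id ∈ x :=
  Finset.inf_induction x.top_mem (fun _ ha _ hb => x.inf_mem ha hb) h

def ofPrimeIdeal (J : Ideal B) (hJ : J.IsPrime) : BAUltrafilter B where
  carrier := (J : Set B)ᶜ
  top_mem := hJ.top_notMem
  bot_not_mem := not_not_intro J.bot_mem
  inf_mem _ _ hx hy hxy := (hJ.mem_or_mem hxy).elim hx hy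
  mem_of_le _ _ hx hxy hy := hx (J.lower hxy hy)
  mem_or_compl_mem _ := hJ.notMem_or_compl_notMem

theorem exists_forall_mem_of_not_finset_inf_le {S : Set B} {c : B}
    (h : ∀ F : Finset B, (∀ a ∈ F, a ∈ S) → ¬ F.inf id ≤ c) :
    ∃ x : BAUltrafilter B, (∀ s ∈ S, s ∈ x) ∧ c ∉ x := by
  classical
  have hF : IsPFilter {b | ∃ F : Finset B, (∀ a ∈ F, a ∈ S) ∧ F.inf id ≤ b} := by
    refine IsPFilter.of_def ⟨⊤, ∅, by simp, le_top⟩ ?_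
      fun hbd ⟨F, hFS, hF⟩ => ⟨F, hFS, hF.trans hbd⟩
    rintro a ⟨F, hFS, hFa⟩ b ⟨G, hGS, hGb⟩
    refine ⟨(F ∪ G).inf id, ⟨F ∪ G, ?_, le_rfl⟩, ?_, ?_⟩
    · simpa [or_imp, forall_and] using ⟨hFS, hGS⟩
    · exact (Finset.inf_mono Finset.subset_union_left).trans hFa
    · exact (Finset.inf_mono Finset.subset_union_right).trans hGb
  have hdisj : Disjoint (hF.toPFilter : Set B) (Ideal.principal c : Set B) :=
    Set.disjoint_left.2 fun _ ⟨F, hFS, hFb⟩ hbc => h F hFS (hFb.trans hbc)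
  obtain ⟨J, hJ, hcJ, hFJ⟩ := DistribLattice.prime_ideal_of_disjoint_filter_ideal hdisj
  refine ⟨ofPrimeIdeal J hJ, fun s hs => Set.disjoint_left.1 hFJ ⟨{s}, by simpa, by simp⟩,
    not_not_intro (hcJ Ideal.mem_principal_self)⟩

theorem exists_mem_of_ne_bot {b : B} (hb : b ≠ ⊥) : ∃ x : BAUltrafilter B, b ∈ x := by
  obtain ⟨x, hx, -⟩ := exists_forall_mem_of_not_finset_inf_le (S := {b}) (c := ⊥)
    fun F hF hle => hb (le_bot_iff.1 ((Finset.le_inf fun a ha => (hF a ha).ge).trans hle))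
  exact ⟨x, hx b rfl⟩

theorem isOpen_setOf_mem (b : B) : IsOpen {q : BAUltrafilter B | b ∈ q} :=
  isOpen_generateFrom_of_mem ⟨b, rfl⟩

theorem isTopologicalBasis_setOf_mem :
    IsTopologicalBasis {U | ∃ b : B, U = {q : BAUltrafilter B | b ∈ q}} where
  exists_subset_inter := by
    rintro _ ⟨b, rfl⟩ _ ⟨c, rfl⟩ x ⟨hb, hc⟩
    exact ⟨_, ⟨b ⊓ c, rfl⟩, x.inf_mem hb hc,
      fun q hq => ⟨q.mem_of_le hq inf_le_left, q.mem_of_le hq inf_le_right⟩⟩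
  sUnion_eq := Set.sUnion_eq_univ_iff.2 fun x => ⟨_, ⟨⊤, rfl⟩, x.top_mem⟩
  eq_generateFrom := rfl

theorem exists_ne_bot_forall_notMem_of_not_dense {Q : Set (BAUltrafilter B)} (hQ : ¬ Dense Q) :
    ∃ b : B, b ≠ ⊥ ∧ ∀ q ∈ Q, b ∉ q := by
  simp only [isTopologicalBasis_setOf_mem.dense_iff, not_forall] at hQ
  obtain ⟨_, ⟨b, rfl⟩, ⟨x, hx⟩, hempty⟩ := hQ
  exact ⟨b, ne_bot_of_mem hx, fun q hq hbq => hempty ⟨q, hbq, hq⟩⟩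

theorem exists_mk_le_forall_finset_inf_mem (T : Set B) :
    ∃ W : Set (BAUltrafilter B), #W ≤ #(Finset T) ∧
      ∀ F : Finset B, (∀ a ∈ F, a ∈ T) → F.inf id ≠ ⊥ →
        ∃ w ∈ W, F.inf id ∈ w := by
  choose w hw using fun F : {F : Finset B // (∀ a ∈ F, a ∈ T) ∧ F.inf id ≠ ⊥} =>
    exists_mem_of_ne_bot F.2.2
  refine ⟨Set.range w, ?_, fun F hFT hF => ⟨_, ⟨⟨F, hFT, hF⟩, rfl⟩, hw _⟩⟩
  calc #(Set.range w)
      ≤ #{F : Finset B // (∀ a ∈ F, a ∈ T) ∧ F.inf id ≠ ⊥} := mk_range_le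
    _ ≤ #{F : Finset B // ∀ a ∈ F, a ∈ T} := mk_subtype_mono fun _ h => h.1
    _ = #(Finset T) := mk_congr (Equiv.finsetSubtypeComm (· ∈ T)).symm

theorem exists_mem_notMem_of_mk_lt {lam : Cardinal.{u}} (hlam : ℵ₀ ≤ lam)
    (hnotdense : ∀ Q : Set (BAUltrafilter B), #Q < lam → ¬ Dense Q)
    {S : Set (BAUltrafilter B)} {T : Set B} (hS : #S < lam) (hT : #T < lam) :
    ∃ (x y : BAUltrafilter B) (u : B),
      u ∈ x ∧ u ∉ y ∧ (∀ s ∈ S, u ∉ s) ∧ ∀ t ∈ T, t ∈ x → t ∈ y := by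
  obtain ⟨W, hWT, hW⟩ := exists_mk_le_forall_finset_inf_mem T
  have hSW : #(S ∪ W : Set _) < lam :=
    (mk_union_le S W).trans_lt (add_lt_of_lt hlam hS (hWT.trans_lt (mk_finset_lt hlam hT)))
  obtain ⟨u, hu, huSW⟩ := exists_ne_bot_forall_notMem_of_not_dense (hnotdense _ hSW)
  obtain ⟨x, hux⟩ := exists_mem_of_ne_bot hu
  -- A nonzero finite meet of `T` lies in a member of `W`, and `u` lies in none.
  have hTx : ∀ F : Finset B, (∀ a ∈ F, a ∈ {t ∈ T | t ∈ x}) → ¬ F.inf id ≤ u := by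
    intro F hF hle
    obtain ⟨w, hwW, hw⟩ :=
      hW F (fun a ha => (hF a ha).1) (ne_bot_of_mem (finset_inf_mem fun a ha => (hF a ha).2))
    exact huSW w (Or.inr hwW) (w.mem_of_le hw hle)
  obtain ⟨y, hTy, huy⟩ := exists_forall_mem_of_not_finset_inf_le hTx
  exact ⟨x, y, u, hux, huy, fun s hs => huSW s (Or.inl hs), fun t ht htx => hTy t ⟨ht, htx⟩⟩

end BAUltrafilter

structure SeparatingSeq (B : Type u) [BooleanAlgebra B] (ι : Type*) [LinearOrder ι] where
  x : ι → BAUltrafilter B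
  y : ι → BAUltrafilter B
  u : ι → B
  mem_x : ∀ β, u β ∈ x β
  notMem_y : ∀ β, u β ∉ y β
  notMem_x_of_lt : ∀ ⦃γ β⦄, γ < β → u β ∉ x γ
  mem_y_of_mem_x : ∀ ⦃γ β⦄, γ < β → u γ ∈ x β → u γ ∈ y β

namespace SeparatingSeq

open BAUltrafilter

variable {B : Type u} [BooleanAlgebra B] {ι : Type*} [LinearOrder ι] (s : SeparatingSeq B ι)

def point (β : ι) : BAUltrafilter B × BAUltrafilter B := (s.x β, s.y β)

theorem injective_point : Function.Injective s.point := by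
  intro β γ h
  have hx : s.x β = s.x γ := congrArg Prod.fst h
  by_contra hne
  rcases lt_or_gt_of_ne hne with hlt | hlt
  · exact s.notMem_x_of_lt hlt (hx ▸ s.mem_x γ)
  · exact s.notMem_x_of_lt hlt (hx.symm ▸ s.mem_x β)

theorem setOf_mem_prod_inter_range (β : ι) :
    {q | s.u β ∈ q} ×ˢ {q | (s.u β)ᶜ ∈ q} ∩ Set.range s.point = {s.point β} := by
  refine Set.eq_singleton_iff_unique_mem.2
    ⟨⟨⟨s.mem_x β, compl_mem_iff_notMem.2 (s.notMem_y β)⟩, β, rfl⟩, ?_⟩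
  rintro _ ⟨⟨hx, hy⟩, γ, rfl⟩
  rcases lt_trichotomy γ β with hlt | rfl | hlt
  · exact absurd hx (s.notMem_x_of_lt hlt)
  · rfl
  · exact absurd (s.mem_y_of_mem_x hlt hx) (compl_mem_iff_notMem.1 hy)

theorem nonempty {ι : Type u} [LinearOrder ι] [WellFoundedLT ι] {lam : Cardinal.{u}}
    (hlam : ℵ₀ ≤ lam) (hnotdense : ∀ Q : Set (BAUltrafilter B), #Q < lam → ¬ Dense Q)
    (hι : ∀ β : ι, #(Set.Iio β) < lam) : Nonempty (SeparatingSeq B ι) := by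
  obtain ⟨f, hf⟩ := WellFoundedLT.exists_seq_of_forall_exists
    (P := fun _ g (z : BAUltrafilter B × BAUltrafilter B × B) =>
      z.2.2 ∈ z.1 ∧ z.2.2 ∉ z.2.1 ∧
        ∀ γ, z.2.2 ∉ (g γ).1 ∧ ((g γ).2.2 ∈ z.1 → (g γ).2.2 ∈ z.2.1)) fun β g => by
    obtain ⟨x, y, u, hux, huy, hS, hT⟩ := exists_mem_notMem_of_mk_lt hlam hnotdense
      (S := Set.range fun γ => (g γ).1) (T := Set.range fun γ => (g γ).2.2)
      (mk_range_le.trans_lt (hι β)) (mk_range_le.trans_lt (hι β))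
    exact ⟨(x, y, u), hux, huy, fun γ => ⟨hS _ ⟨γ, rfl⟩, hT _ ⟨γ, rfl⟩⟩⟩
  exact ⟨{ x := fun β => (f β).1
           y := fun β => (f β).2.1
           u := fun β => (f β).2.2
           mem_x := fun β => (hf β).1
           notMem_y := fun β => (hf β).2.1
           notMem_x_of_lt := fun γ β h => ((hf β).2.2 ⟨γ, h⟩).1
           mem_y_of_mem_x := fun γ β h => ((hf β).2.2 ⟨γ, h⟩).2 }⟩

end SeparatingSeq

theorem density_lt_implies_discrete_square_general (B : Type u) [BooleanAlgebra B]
    (lam : Cardinal.{u}) (hlam : ℵ₀ ≤ lam)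
    (hnotdense : ∀ Q : Set (BAUltrafilter B), #Q < lam → ¬ Dense Q) :
    ∃ D : Set (BAUltrafilter B × BAUltrafilter B),
      #D = lam ∧
      ∀ p ∈ D, ∃ U : Set (BAUltrafilter B × BAUltrafilter B),
        IsOpen U ∧ U ∩ D = {p} := by
  obtain ⟨s⟩ := SeparatingSeq.nonempty (ι := lam.ord.ToType) hlam hnotdense
    fun β => by simpa using mk_Iio_lt β
  refine ⟨Set.range s.point, ?_, ?_⟩
  · rw [mk_range_eq _ s.injective_point, mk_toType, card_ord]
  · rintro _ ⟨β, rfl⟩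
    exact ⟨_, (BAUltrafilter.isOpen_setOf_mem _).prod (BAUltrafilter.isOpen_setOf_mem _),
      s.setOf_mem_prod_inter_range β⟩

/-- If `B` is an infinite Boolean algebra and `λ` is an infinite
cardinal such that no set of ultrafilters of `B` of cardinality `< λ` is dense
in the Stone space, then `Stone(B) × Stone(B)` has a discrete subspace of
cardinality `λ`. -/
theorem density_lt_implies_discrete_square (B : Type u) [BooleanAlgebra B] [Infinite B]
    (lam : Cardinal.{u}) (hlam : ℵ₀ ≤ lam)
    (hnotdense : ∀ Q : Set (BAUltrafilter B), #Q < lam → ¬ Dense Q) :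
    ∃ D : Set (BAUltrafilter B × BAUltrafilter B),
      #D = lam ∧
      ∀ p ∈ D, ∃ U : Set (BAUltrafilter B × BAUltrafilter B),
        IsOpen U ∧ U ∩ D = {p} :=
  density_lt_implies_discrete_square_general B lam hlam hnotdense
end

section
/- Let B be a Boolean algebra, C a Boolean subalgebra of B, and a ∈ B with a ∉ C. Then the set I = {c ∈ C : there exist b₀, b₁ ∈ C with c ≤ b₀ ⊔ b₁, b₀ ⊓ a = ⊥, and b₁ ⊓ aᶜ = ⊥} is a proper ideal of C; that is, I is downward closed in C, closed under finite joins, contains ⊥, and does not contain ⊤. -/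
universe u

/-!
If `⊤ ≤ b₀ ⊔ b₁` with `b₀` disjoint from `a` and `b₁` disjoint from `aᶜ`, then `b₁ ≤ a` forces
`b₀ ⊔ a = ⊤`, so `b₀` and `a` are complements and `a = b₀ᶜ` would lie in `C`. Closure under
joins holds because witnesses can be joined componentwise.
-/

theorem eq_compl_of_inf_eq_bot_of_top_le_sup {B : Type*} [BooleanAlgebra B] {a b₀ b₁ : B}
    (h₀ : b₀ ⊓ a = ⊥) (h₁ : b₁ ⊓ aᶜ = ⊥) (htop : ⊤ ≤ b₀ ⊔ b₁) : a = b₀ᶜ := by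
  have hb₁ : b₁ ≤ a := by
    simpa using le_compl_iff_disjoint_right.2 (disjoint_iff.2 h₁)
  have hsup : b₀ ⊔ a = ⊤ := top_le_iff.1 (htop.trans (sup_le_sup_left hb₁ b₀))
  exact (IsCompl.of_eq h₀ hsup).compl_eq.symm

section

variable {B : Type*} [BooleanAlgebra B] {C : Set B} {a : B}

def IsBelowSeparatingSup (C : Set B) (a c : B) : Prop :=
  ∃ b₀ ∈ C, ∃ b₁ ∈ C, c ≤ b₀ ⊔ b₁ ∧ b₀ ⊓ a = ⊥ ∧ b₁ ⊓ aᶜ = ⊥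

theorem isBelowSeparatingSup_bot (hbot : ⊥ ∈ C) : IsBelowSeparatingSup C a ⊥ :=
  ⟨⊥, hbot, ⊥, hbot, bot_le, bot_inf_eq _, bot_inf_eq _⟩

theorem IsBelowSeparatingSup.mono {c d : B} (hd : IsBelowSeparatingSup C a d) (hcd : c ≤ d) :
    IsBelowSeparatingSup C a c :=
  let ⟨b₀, hb₀, b₁, hb₁, hle, h₀, h₁⟩ := hd
  ⟨b₀, hb₀, b₁, hb₁, hcd.trans hle, h₀, h₁⟩

theorem IsBelowSeparatingSup.sup (hsup : ∀ x ∈ C, ∀ y ∈ C, x ⊔ y ∈ C) {c d : B}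
    (hc : IsBelowSeparatingSup C a c) (hd : IsBelowSeparatingSup C a d) :
    IsBelowSeparatingSup C a (c ⊔ d) := by
  obtain ⟨b₀, hb₀, b₁, hb₁, hle, h₀, h₁⟩ := hc
  obtain ⟨b₀', hb₀', b₁', hb₁', hle', h₀', h₁'⟩ := hd
  refine ⟨b₀ ⊔ b₀', hsup _ hb₀ _ hb₀', b₁ ⊔ b₁', hsup _ hb₁ _ hb₁', ?_, ?_, ?_⟩
  · calc c ⊔ d ≤ (b₀ ⊔ b₁) ⊔ (b₀' ⊔ b₁') := sup_le_sup hle hle'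
      _ = (b₀ ⊔ b₀') ⊔ (b₁ ⊔ b₁') := sup_sup_sup_comm _ _ _ _
  · rw [inf_sup_right, h₀, h₀', sup_bot_eq]
  · rw [inf_sup_right, h₁, h₁', sup_bot_eq]

theorem IsBelowSeparatingSup.mem_of_top (hcompl : ∀ x ∈ C, xᶜ ∈ C)
    (h : IsBelowSeparatingSup C a ⊤) : a ∈ C :=
  let ⟨b₀, hb₀, _, _, hle, h₀, h₁⟩ := h
  eq_compl_of_inf_eq_bot_of_top_le_sup h₀ h₁ hle ▸ hcompl b₀ hb₀

end

theorem proper_ideal_of_not_mem_subalgebra_general (B : Type u) [BooleanAlgebra B]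
    (C : Set B) (hbot : ⊥ ∈ C)
    (hsup : ∀ x ∈ C, ∀ y ∈ C, x ⊔ y ∈ C)
    (hcompl : ∀ x ∈ C, xᶜ ∈ C)
    (a : B) (ha : a ∉ C) :
    let I : Set B :=
      {c | c ∈ C ∧ ∃ b₀ ∈ C, ∃ b₁ ∈ C, c ≤ b₀ ⊔ b₁ ∧ b₀ ⊓ a = ⊥ ∧ b₁ ⊓ aᶜ = ⊥}
    ⊥ ∈ I ∧
    (∀ c ∈ C, ∀ d ∈ I, c ≤ d → c ∈ I) ∧
    (∀ c ∈ I, ∀ d ∈ I, c ⊔ d ∈ I) ∧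
    ⊤ ∉ I := by
  intro I
  exact ⟨⟨hbot, isBelowSeparatingSup_bot hbot⟩,
    fun c hc _ hd hcd => ⟨hc, IsBelowSeparatingSup.mono hd.2 hcd⟩,
    fun _ hc _ hd => ⟨hsup _ hc.1 _ hd.1, IsBelowSeparatingSup.sup hsup hc.2 hd.2⟩,
    fun htop => ha (IsBelowSeparatingSup.mem_of_top hcompl htop.2)⟩

/-- If `C` is a Boolean subalgebra of `B` and `a ∈ B` with `a ∉ C`,
then `I = {c ∈ C : ∃ b₀ b₁ ∈ C, c ≤ b₀ ⊔ b₁, b₀ ⊓ a = ⊥, b₁ ⊓ aᶜ = ⊥}` is a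
proper ideal of `C`: it contains `⊥`, is downward closed in `C`, is closed
under finite joins, and does not contain `⊤`. -/
theorem proper_ideal_of_not_mem_subalgebra (B : Type u) [BooleanAlgebra B]
    (C : Set B) (hbot : ⊥ ∈ C) (htop : ⊤ ∈ C)
    (hinf : ∀ x ∈ C, ∀ y ∈ C, x ⊓ y ∈ C)
    (hsup : ∀ x ∈ C, ∀ y ∈ C, x ⊔ y ∈ C)
    (hcompl : ∀ x ∈ C, xᶜ ∈ C)
    (a : B) (ha : a ∉ C) :
    let I : Set B :=
      {c | c ∈ C ∧ ∃ b₀ ∈ C, ∃ b₁ ∈ C, c ≤ b₀ ⊔ b₁ ∧ b₀ ⊓ a = ⊥ ∧ b₁ ⊓ aᶜ = ⊥}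
    ⊥ ∈ I ∧
    (∀ c ∈ C, ∀ d ∈ I, c ≤ d → c ∈ I) ∧
    (∀ c ∈ I, ∀ d ∈ I, c ⊔ d ∈ I) ∧
    ⊤ ∉ I :=
  proper_ideal_of_not_mem_subalgebra_general B C hbot hsup hcompl a ha
end

section
/- Let B be a Boolean algebra, C a Boolean subalgebra of B, and a ∈ B with a ∉ C. Then there exists an ultrafilter q of the Boolean algebra C such that for every b ∈ q one has b ⊓ a ≠ ⊥ and b ⊓ aᶜ ≠ ⊥ (the meets computed in B). -/
/-!
The elements of `C` below `a` and those below `aᶜ` generate a proper ideal of `C`: if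
`x ⊔ y = ⊤` with `x ≤ a` and `y ≤ aᶜ`, then `x = a`, so `a ∈ C`. Extend it to a maximal, hence
prime, ideal `J` of `C`. The complement of `J` is an ultrafilter of `C`, and none of its members
lies below `a` or below `aᶜ`, i.e. each of them meets both `a` and `aᶜ`.
-/

universe u

/-- `q` is an ultrafilter of the Boolean subalgebra `C` of `B`: a proper filter
on `C` containing, for each `c ∈ C`, either `c` or `cᶜ`. -/
def IsUltrafilterIn {B : Type u} [BooleanAlgebra B] (C : Set B) (q : Set B) : Prop :=
  q ⊆ C ∧ ⊤ ∈ q ∧ ⊥ ∉ q ∧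
  (∀ x ∈ q, ∀ y ∈ q, x ⊓ y ∈ q) ∧
  (∀ x ∈ q, ∀ y ∈ C, x ≤ y → y ∈ q) ∧
  (∀ c ∈ C, c ∈ q ∨ cᶜ ∈ q)

open Order

namespace BooleanSubalgebra

variable {B : Type u} [BooleanAlgebra B] (L : BooleanSubalgebra B)

def idealBelow (a : B) : Ideal L where
  carrier := {c | (c : B) ≤ a}
  lower' _ _ hcd hd := (Subtype.mono_coe _ hcd).trans hd
  nonempty' := ⟨⊥, bot_le⟩
  directed' x hx y hy := ⟨x ⊔ y, sup_le hx hy, le_sup_left, le_sup_right⟩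

@[simp]
theorem mem_idealBelow {a : B} {c : L} : c ∈ L.idealBelow a ↔ (c : B) ≤ a := Iff.rfl

variable {L}

theorem isProper_idealBelow_sup_idealBelow_compl {a : B} (ha : a ∉ L) :
    (L.idealBelow a ⊔ L.idealBelow aᶜ).IsProper := by
  refine Ideal.isProper_of_notMem (p := ⊤) fun htop => ha ?_
  obtain ⟨x, hxa, y, hya, hxy⟩ := Ideal.mem_sup.1 htop
  have hcodisjoint : Codisjoint (x : B) aᶜ :=
    (codisjoint_iff.2 (congrArg Subtype.val (top_le_iff.1 hxy))).mono_right hya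
  have hax : a ≤ x := compl_compl a ▸ codisjoint_iff_compl_le_left.1 hcodisjoint
  exact le_antisymm hxa hax ▸ x.2

theorem inf_ne_bot_and_inf_compl_ne_bot_of_notMem {a : B} {J : Ideal L}
    (hJ : L.idealBelow a ⊔ L.idealBelow aᶜ ≤ J) {b : L} (hb : b ∉ J) :
    (b : B) ⊓ a ≠ ⊥ ∧ (b : B) ⊓ aᶜ ≠ ⊥ :=
  ⟨fun hba => hb <| le_sup_right.trans hJ <|
      (mem_idealBelow L).2 (disjoint_iff.2 hba).le_compl_right,
    fun hba => hb <| le_sup_left.trans hJ <|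
      (mem_idealBelow L).2 (disjoint_compl_right_iff.1 (disjoint_iff.2 hba))⟩

theorem _root_.Order.Ideal.IsPrime.isUltrafilterIn_image_compl {J : Ideal L} (hJ : J.IsPrime) :
    IsUltrafilterIn (L : Set B) (Subtype.val '' (J : Set L)ᶜ) := by
  refine ⟨?_, ⟨⊤, hJ.top_notMem, rfl⟩, ?_, ?_, ?_, ?_⟩
  · rintro _ ⟨c, -, rfl⟩
    exact c.2
  · rintro ⟨c, hc, hcbot⟩
    exact hc ((show c = ⊥ from Subtype.ext hcbot) ▸ J.bot_mem)
  · rintro _ ⟨x, hx, rfl⟩ _ ⟨y, hy, rfl⟩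
    exact ⟨x ⊓ y, fun h => (hJ.mem_or_mem h).elim hx hy, rfl⟩
  · rintro _ ⟨x, hx, rfl⟩ y hy hxy
    exact ⟨⟨y, hy⟩, fun h => hx (J.lower hxy h), rfl⟩
  · intro c hc
    by_cases hcJ : ⟨c, hc⟩ ∈ J
    · refine .inr ⟨⟨c, hc⟩ᶜ, fun hcJ' => hJ.top_notMem ?_, rfl⟩
      simpa using J.sup_mem hcJ hcJ'
    · exact .inl ⟨⟨c, hc⟩, hcJ, rfl⟩

end BooleanSubalgebra

theorem exists_ultrafilter_meeting_both_general (B : Type u) [BooleanAlgebra B]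
    (C : Set B) (hbot : ⊥ ∈ C)
    (hinf : ∀ x ∈ C, ∀ y ∈ C, x ⊓ y ∈ C)
    (hsup : ∀ x ∈ C, ∀ y ∈ C, x ⊔ y ∈ C)
    (hcompl : ∀ x ∈ C, xᶜ ∈ C)
    (a : B) (ha : a ∉ C) :
    ∃ q : Set B, IsUltrafilterIn C q ∧ ∀ b ∈ q, b ⊓ a ≠ ⊥ ∧ b ⊓ aᶜ ≠ ⊥ := by
  let L : BooleanSubalgebra B :=
    ⟨⟨C, fun x hx y hy => hsup x hx y hy, fun x hx y hy => hinf x hx y hy⟩,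
      fun {x} hx => hcompl x hx, hbot⟩
  obtain ⟨J, hLJ, hJ⟩ := (L.isProper_idealBelow_sup_idealBelow_compl ha).exists_le_maximal
  refine ⟨_, hJ.isPrime.isUltrafilterIn_image_compl, ?_⟩
  rintro _ ⟨b, hbJ, rfl⟩
  exact BooleanSubalgebra.inf_ne_bot_and_inf_compl_ne_bot_of_notMem hLJ hbJ

/-- If `C` is a Boolean subalgebra of `B` and `a ∈ B \ C`, then
there is an ultrafilter `q` of `C` such that every `b ∈ q` meets both `a` and
`aᶜ` nontrivially (meets computed in `B`). -/
theorem exists_ultrafilter_meeting_both (B : Type u) [BooleanAlgebra B]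
    (C : Set B) (hbot : ⊥ ∈ C) (htop : ⊤ ∈ C)
    (hinf : ∀ x ∈ C, ∀ y ∈ C, x ⊓ y ∈ C)
    (hsup : ∀ x ∈ C, ∀ y ∈ C, x ⊔ y ∈ C)
    (hcompl : ∀ x ∈ C, xᶜ ∈ C)
    (a : B) (ha : a ∉ C) :
    ∃ q : Set B, IsUltrafilterIn C q ∧ ∀ b ∈ q, b ⊓ a ≠ ⊥ ∧ b ⊓ aᶜ ≠ ⊥ :=
  exists_ultrafilter_meeting_both_general B C hbot hinf hsup hcompl a ha
end

section
/- Let B be a Boolean algebra, C a Boolean subalgebra of B, and a ∈ B with a ∉ C. Then there exist ultrafilters p⁰ and p¹ of B such that aᶜ ∈ p⁰, a ∈ p¹, and for every c ∈ C one has c ∈ p⁰ if and only if c ∈ p¹ (that is, p⁰ and p¹ have the same trace on C). -/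
/-!
Among the elements of `C`, those `x` with `x ⊓ a ∈ C` form a sup-closed set not containing `⊤`
(because `a ∉ C`), so some ultrafilter `q` of `B` misses all of them. If `m ∈ C` lies outside `q`,
then `mᶜ ∈ q`, hence `mᶜ ⊓ a ∉ C`; in particular neither `a` nor `aᶜ` lies below `m`.
So both `a` and `aᶜ` are compatible with the trace of `q` on `C`, and the prime ideal theorem
yields ultrafilters containing `a`, respectively `aᶜ`, with that same trace.
-/

open Cardinal

universe u

theorem SupClosed.isIdeal_lowerClosure {α : Type*} [SemilatticeSup α] {s : Set α}
    (hs : SupClosed s) (hne : s.Nonempty) : Order.IsIdeal (lowerClosure s : Set α) := by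
  refine ⟨(lowerClosure s).lower, hne.mono subset_lowerClosure, ?_⟩
  rintro x ⟨u, hu, hxu⟩ y ⟨v, hv, hyv⟩
  exact ⟨u ⊔ v, ⟨u ⊔ v, hs hu hv, le_rfl⟩, le_sup_of_le_left hxu, le_sup_of_le_right hyv⟩

namespace BAUltrafilter

variable {B : Type u} [BooleanAlgebra B]

theorem compl_mem_iff (p : BAUltrafilter B) {x : B} : xᶜ ∈ p ↔ x ∉ p := by
  refine ⟨fun hxc hx => p.bot_not_mem ?_, (p.mem_or_compl_mem x).resolve_left⟩
  simpa using p.inf_mem hx hxc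

theorem sup_notMem (p : BAUltrafilter B) {x y : B} (hx : x ∉ p) (hy : y ∉ p) : x ⊔ y ∉ p := by
  rw [← compl_mem_iff, compl_sup]
  exact p.inf_mem (p.compl_mem_iff.mpr hx) (p.compl_mem_iff.mpr hy)

def ofIsPrime (I : Order.Ideal B) [I.IsPrime] : BAUltrafilter B where
  carrier := (I : Set B)ᶜ
  top_mem := Order.Ideal.IsProper.top_notMem inferInstance
  bot_not_mem := not_not.mpr I.bot_mem
  inf_mem _ _ hx hy hxy := (Order.Ideal.IsPrime.mem_or_mem inferInstance hxy).elim hx hy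
  mem_of_le _ _ hx hxy := Order.Ideal.mem_compl_of_ge hxy hx
  mem_or_compl_mem _ := Order.Ideal.IsProper.notMem_or_compl_notMem inferInstance

theorem exists_forall_notMem_of_supClosed {s : Set B} (hs : SupClosed s) (hne : s.Nonempty)
    (htop : ⊤ ∉ s) : ∃ p : BAUltrafilter B, ∀ x ∈ s, x ∉ p := by
  set I := (hs.isIdeal_lowerClosure hne).toIdeal
  have hI : I.IsProper := by
    rw [Order.Ideal.isProper_iff_top_notMem]
    rintro ⟨x, hx, htx⟩
    exact htop (top_le_iff.mp htx ▸ hx)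
  obtain ⟨J, hIJ, hJ⟩ := hI.exists_le_maximal
  exact ⟨ofIsPrime J, fun x hx => not_not.mpr (hIJ (subset_lowerClosure hx))⟩

theorem exists_mem_and_trace_eq (q : BAUltrafilter B) {C : Set B} (hbot : ⊥ ∈ C)
    (hsup : SupClosed C) (hcompl : ∀ x ∈ C, xᶜ ∈ C) {b : B} (hb : ∀ m ∈ C, m ∉ q → ¬b ≤ m) :
    ∃ p : BAUltrafilter B, b ∈ p ∧ ∀ c ∈ C, (c ∈ p ↔ c ∈ q) := by
  set s := (· ⊔ bᶜ) '' {m | m ∈ C ∧ m ∉ q}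
  have hs : SupClosed s := by
    rintro _ ⟨m, ⟨hmC, hmq⟩, rfl⟩ _ ⟨n, ⟨hnC, hnq⟩, rfl⟩
    exact ⟨m ⊔ n, ⟨hsup hmC hnC, q.sup_notMem hmq hnq⟩, sup_sup_distrib_right m n bᶜ⟩
  have hbot_s : ⊥ ⊔ bᶜ ∈ s := ⟨⊥, ⟨hbot, q.bot_not_mem⟩, rfl⟩
  have htop : ⊤ ∉ s := by
    rintro ⟨m, ⟨hmC, hmq⟩, hm⟩
    refine hb m hmC hmq ?_
    simpa using codisjoint_iff_compl_le_left.mp (codisjoint_iff.mpr hm)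
  obtain ⟨p, hp⟩ := exists_forall_notMem_of_supClosed hs ⟨_, hbot_s⟩ htop
  have trace_subset : ∀ c ∈ C, c ∉ q → c ∉ p := fun c hcC hcq hcp =>
    hp (c ⊔ bᶜ) ⟨c, ⟨hcC, hcq⟩, rfl⟩ (p.mem_of_le hcp le_sup_left)
  refine ⟨p, ?_, fun c hcC => ⟨fun hcp => ?_, fun hcq => ?_⟩⟩
  · rw [← compl_compl b, compl_mem_iff]
    exact fun hbp => hp (⊥ ⊔ bᶜ) hbot_s (by simpa using hbp)
  · exact not_not.mp fun hcq => trace_subset c hcC hcq hcp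
  · by_contra hcp
    exact trace_subset cᶜ (hcompl c hcC) (fun h => q.compl_mem_iff.mp h hcq)
      (p.compl_mem_iff.mpr hcp)

end BAUltrafilter

theorem exists_ultrafilters_same_trace_general (B : Type u) [BooleanAlgebra B]
    (C : Set B) (hbot : ⊥ ∈ C)
    (hsup : ∀ x ∈ C, ∀ y ∈ C, x ⊔ y ∈ C)
    (hcompl : ∀ x ∈ C, xᶜ ∈ C)
    (a : B) (ha : a ∉ C) :
    ∃ p0 p1 : BAUltrafilter B,
      aᶜ ∈ p0 ∧ a ∈ p1 ∧ ∀ c ∈ C, (c ∈ p0 ↔ c ∈ p1) := by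
  have hC : SupClosed C := fun x hx y hy => hsup x hx y hy
  obtain ⟨q, hq⟩ := BAUltrafilter.exists_forall_notMem_of_supClosed
    (s := {x | x ∈ C ∧ x ⊓ a ∈ C})
    (fun x ⟨hxC, hxa⟩ y ⟨hyC, hya⟩ => ⟨hC hxC hyC, inf_sup_right x y a ▸ hC hxa hya⟩)
    ⟨⊥, hbot, by simpa using hbot⟩ (fun ⟨_, h⟩ => ha (by simpa using h))
  have outside : ∀ m ∈ C, m ∉ q → mᶜ ⊓ a ∉ C := fun m hmC hmq h =>
    hmq (not_not.mp <| q.compl_mem_iff.not.mp <| hq mᶜ ⟨hcompl m hmC, h⟩)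
  obtain ⟨p0, hp0, hp0q⟩ := q.exists_mem_and_trace_eq hbot hC hcompl (b := aᶜ)
    fun m hmC hmq ham => outside m hmC hmq <| by
      rw [inf_eq_left.mpr (compl_le_iff_compl_le.mp ham)]
      exact hcompl m hmC
  obtain ⟨p1, hp1, hp1q⟩ := q.exists_mem_and_trace_eq hbot hC hcompl (b := a)
    fun m hmC hmq ham => outside m hmC hmq <| by
      rw [disjoint_iff.mp (disjoint_compl_left_iff.mpr ham)]
      exact hbot
  exact ⟨p0, p1, hp0, hp1, fun c hc => (hp0q c hc).trans (hp1q c hc).symm⟩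

/-- If `C` is a Boolean subalgebra of `B` and `a ∈ B \ C`, then
there are ultrafilters `p⁰, p¹` of `B` with `aᶜ ∈ p⁰`, `a ∈ p¹`, having the
same trace on `C`. -/
theorem exists_ultrafilters_same_trace (B : Type u) [BooleanAlgebra B]
    (C : Set B) (hbot : ⊥ ∈ C) (htop : ⊤ ∈ C)
    (hinf : ∀ x ∈ C, ∀ y ∈ C, x ⊓ y ∈ C)
    (hsup : ∀ x ∈ C, ∀ y ∈ C, x ⊔ y ∈ C)
    (hcompl : ∀ x ∈ C, xᶜ ∈ C)
    (a : B) (ha : a ∉ C) :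
    ∃ p0 p1 : BAUltrafilter B,
      aᶜ ∈ p0 ∧ a ∈ p1 ∧ ∀ c ∈ C, (c ∈ p0 ↔ c ∈ p1) :=
  exists_ultrafilters_same_trace_general B C hbot hsup hcompl a ha
end
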